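/- arXiv:2211.03339 — 3 statements merged into one kernel-verified Lean document; each statement's English description precedes it below -/
import Mathlib

section
/- Let n ≥ 2 and N = n(n−1)/2. Let (A_k)_{k≥0} be a sequence of n×n real symmetric matrices such that for every k there exist indices 1 ≤ i_k < j_k ≤ n and a Jacobi rotation J_k = J(i_k,j_k;c_k,s_k) with A_{k+1} = J_kᵀ A_k J_k, (A_{k+1})_{i_k j_k} = 0, and |(A_k)_{i_k j_k}| = max_{p≠q} |(A_k)_{pq}|. Then for all k ≥ 0, ‖off(A_k)‖_F² ≤ (1 − 1/N)^k ‖off(A_0)‖_F². -/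
open Matrix

noncomputable def specNorm {m n : ℕ} (A : Matrix (Fin m) (Fin n) ℝ) : ℝ :=
  ‖LinearMap.toContinuousLinearMap (Matrix.toEuclideanLin A)‖

noncomputable def frobNorm {m n : ℕ} (A : Matrix (Fin m) (Fin n) ℝ) : ℝ :=
  Real.sqrt (∑ p, ∑ q, (A p q) ^ 2)

def offDiag {n : ℕ} (A : Matrix (Fin n) (Fin n) ℝ) : Matrix (Fin n) (Fin n) ℝ :=
  fun p q => if p = q then 0 else A p q

def jacobiRot {n : ℕ} (i j : Fin n) (c s : ℝ) : Matrix (Fin n) (Fin n) ℝ :=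
  fun p q =>
    if p = i ∧ q = i then c
    else if p = j ∧ q = j then c
    else if p = i ∧ q = j then s
    else if p = j ∧ q = i then -s
    else if p = q then 1 else 0

open Classical in
noncomputable def eigValsDesc {n : ℕ} (A : Matrix (Fin n) (Fin n) ℝ) : Fin n → ℝ :=
  if hA : A.IsHermitian then
    fun k => (hA.eigenvalues ∘ Tuple.sort hA.eigenvalues) k.rev
  else 0

noncomputable def singValsDesc {m n : ℕ} (A : Matrix (Fin m) (Fin n) ℝ) : Fin n → ℝ :=
  fun k => Real.sqrt (eigValsDesc (Aᵀ * A) k)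

/-!
A Jacobi rotation `J` is orthogonal, so `Jᵀ A J` has the same Frobenius norm as `A`; it only
changes rows and columns `i` and `j`, so the diagonal outside the pivot block is untouched; and
on the `2 × 2` pivot block the Frobenius norm is preserved too. Annihilating the pivot therefore
moves exactly `2 a_ij²` of off-diagonal mass onto the diagonal:
`‖off(Jᵀ A J)‖² = ‖off(A)‖² - 2 a_ij²`. As `a_ij` is the largest off-diagonal entry,
`‖off(A)‖² ≤ n (n - 1) a_ij² = 2 N a_ij²`, and each step contracts by `1 - 1/N`.
-/

section JacobiRotation

variable {n : ℕ} {i j : Fin n} {c s : ℝ}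

theorem mul_jacobiRot_apply (hij : i ≠ j) (M : Matrix (Fin n) (Fin n) ℝ) (p q : Fin n) :
    (M * jacobiRot i j c s) p q =
      if q = i then c * M p i - s * M p j
      else if q = j then s * M p i + c * M p j
      else M p q := by
  rw [mul_apply]
  split_ifs with hqi hqj
  · subst hqi
    rw [Fintype.sum_eq_add q j hij fun t ht => by simp [jacobiRot, ht.1, ht.2]]
    simp [jacobiRot, hij, hij.symm]
    ring
  · subst hqj
    rw [Fintype.sum_eq_add i q hij fun t ht => by simp [jacobiRot, ht.1, ht.2]]
    simp [jacobiRot, hij, hij.symm]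
    ring
  · rw [Fintype.sum_eq_single q fun t ht => by simp [jacobiRot, hqi, hqj, ht]]
    simp [jacobiRot, hqi, hqj]

theorem transpose_jacobiRot_mul_apply (hij : i ≠ j) (M : Matrix (Fin n) (Fin n) ℝ)
    (p q : Fin n) :
    ((jacobiRot i j c s)ᵀ * M) p q =
      if p = i then c * M i q - s * M j q
      else if p = j then s * M i q + c * M j q
      else M p q := by
  rw [← transpose_transpose M, ← transpose_mul, transpose_apply, mul_jacobiRot_apply hij]
  simp only [transpose_apply]

theorem jacobiRot_transpose_mul_self (hij : i ≠ j) (hcs : c ^ 2 + s ^ 2 = 1) :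
    (jacobiRot i j c s)ᵀ * jacobiRot i j c s = 1 := by
  ext p q
  rw [transpose_jacobiRot_mul_apply hij]
  by_cases hpi : p = i <;> by_cases hpj : p = j <;> by_cases hqi : q = i <;>
    by_cases hqj : q = j <;> simp [jacobiRot, one_apply, hpi, hpj, hqi, hqj, hij, hij.symm] <;>
    grind

end JacobiRotation

section Frobenius

variable {n : ℕ}

theorem frobNorm_sq (M : Matrix (Fin n) (Fin n) ℝ) : frobNorm M ^ 2 = ∑ p, ∑ q, M p q ^ 2 :=
  Real.sq_sqrt (by positivity)

theorem frobNorm_eq_sqrt_trace (M : Matrix (Fin n) (Fin n) ℝ) :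
    frobNorm M = √(trace (M * Mᵀ)) := by
  simp only [frobNorm, trace, diag_apply, mul_apply, transpose_apply, sq]

theorem frobNorm_transpose_mul_mul_of_orthogonal {U : Matrix (Fin n) (Fin n) ℝ}
    (hU : Uᵀ * U = 1) (M : Matrix (Fin n) (Fin n) ℝ) :
    frobNorm (Uᵀ * M * U) = frobNorm M := by
  have hU' : U * Uᵀ = 1 := mul_eq_one_comm.mp hU
  rw [frobNorm_eq_sqrt_trace, frobNorm_eq_sqrt_trace, transpose_mul, transpose_mul,
    transpose_transpose]
  congr 1
  calc trace (Uᵀ * M * U * (Uᵀ * (Mᵀ * U))) = trace (Uᵀ * (M * Mᵀ) * U) := by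
        simp only [Matrix.mul_assoc, ← Matrix.mul_assoc U, hU', Matrix.one_mul]
    _ = trace (M * Mᵀ) := by
        rw [trace_mul_comm, ← Matrix.mul_assoc, hU', Matrix.one_mul]

theorem sum_sq_offDiag_row (M : Matrix (Fin n) (Fin n) ℝ) (p : Fin n) :
    ∑ q, offDiag M p q ^ 2 = ∑ q ∈ Finset.univ.erase p, M p q ^ 2 := by
  rw [← Finset.sum_erase Finset.univ (a := p) (by simp [offDiag])]
  exact Finset.sum_congr rfl fun q hq => by simp [offDiag, (Finset.ne_of_mem_erase hq).symm]

theorem frobNorm_offDiag_sq_add_sum_diag (M : Matrix (Fin n) (Fin n) ℝ) :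
    frobNorm (offDiag M) ^ 2 + ∑ p, M p p ^ 2 = frobNorm M ^ 2 := by
  rw [frobNorm_sq, frobNorm_sq, ← Finset.sum_add_distrib]
  refine Finset.sum_congr rfl fun p _ => ?_
  rw [sum_sq_offDiag_row, Finset.sum_erase_add _ _ (Finset.mem_univ p)]

theorem frobNorm_offDiag_sq_le {M : Matrix (Fin n) (Fin n) ℝ} {b : ℝ}
    (hb : ∀ p q, p ≠ q → M p q ^ 2 ≤ b) :
    frobNorm (offDiag M) ^ 2 ≤ ((n * (n - 1) : ℕ) : ℝ) * b := by
  have hrow : ∀ p, ∑ q ∈ Finset.univ.erase p, M p q ^ 2 ≤ ((n - 1 : ℕ) : ℝ) * b := fun p => by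
    have := (Finset.univ.erase p).sum_le_card_nsmul _ b fun q hq => hb p q (Finset.ne_of_mem_erase hq).symm
    rwa [Finset.card_erase_of_mem (Finset.mem_univ p), Finset.card_univ, Fintype.card_fin,
      nsmul_eq_mul] at this
  rw [frobNorm_sq]
  simp only [sum_sq_offDiag_row]
  calc ∑ p, ∑ q ∈ Finset.univ.erase p, M p q ^ 2 ≤ ∑ _p : Fin n, ((n - 1 : ℕ) : ℝ) * b :=
        Finset.sum_le_sum fun p _ => hrow p
    _ = ((n * (n - 1) : ℕ) : ℝ) * b := by simp [mul_assoc]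

end Frobenius

section JacobiStep

variable {n : ℕ} {i j : Fin n} {c s : ℝ}

theorem jacobiRot_conj_apply_self_of_ne (hij : i ≠ j) (A : Matrix (Fin n) (Fin n) ℝ) {p : Fin n}
    (hpi : p ≠ i) (hpj : p ≠ j) :
    ((jacobiRot i j c s)ᵀ * A * jacobiRot i j c s) p p = A p p := by
  rw [mul_jacobiRot_apply hij, if_neg hpi, if_neg hpj, transpose_jacobiRot_mul_apply hij,
    if_neg hpi, if_neg hpj]

theorem jacobiRot_conj_pivot_block_sq (hij : i ≠ j) (hcs : c ^ 2 + s ^ 2 = 1)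
    (A : Matrix (Fin n) (Fin n) ℝ) :
    let B := (jacobiRot i j c s)ᵀ * A * jacobiRot i j c s
    B i i ^ 2 + B j j ^ 2 + B i j ^ 2 + B j i ^ 2 =
      A i i ^ 2 + A j j ^ 2 + A i j ^ 2 + A j i ^ 2 := by
  simp only [mul_jacobiRot_apply hij, transpose_jacobiRot_mul_apply hij, if_pos, if_neg hij,
    if_neg hij.symm]
  linear_combination (A i i ^ 2 + A j j ^ 2 + A i j ^ 2 + A j i ^ 2) * (c ^ 2 + s ^ 2 + 1) * hcs

theorem frobNorm_offDiag_sq_jacobiRot_conj {A : Matrix (Fin n) (Fin n) ℝ} (hA : Aᵀ = A)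
    (hij : i ≠ j) (hcs : c ^ 2 + s ^ 2 = 1)
    (hzero : ((jacobiRot i j c s)ᵀ * A * jacobiRot i j c s) i j = 0) :
    frobNorm (offDiag ((jacobiRot i j c s)ᵀ * A * jacobiRot i j c s)) ^ 2 =
      frobNorm (offDiag A) ^ 2 - 2 * A i j ^ 2 := by
  set B := (jacobiRot i j c s)ᵀ * A * jacobiRot i j c s with hB
  have hBsymm : Bᵀ = B := by rw [hB, transpose_mul, transpose_mul, hA, transpose_transpose,
    Matrix.mul_assoc]
  have hBji : B j i = 0 := by rw [← hBsymm, transpose_apply, hzero]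
  have hAji : A j i = A i j := congrFun (congrFun hA i) j
  have hdiag : ∑ p, (B p p ^ 2 - A p p ^ 2) = (B i i ^ 2 - A i i ^ 2) + (B j j ^ 2 - A j j ^ 2) :=
    Fintype.sum_eq_add i j hij fun p hp => by
      rw [hB, jacobiRot_conj_apply_self_of_ne hij A hp.1 hp.2, sub_self]
  have hblock := jacobiRot_conj_pivot_block_sq hij hcs A
  have hB_off := frobNorm_offDiag_sq_add_sum_diag B
  have hA_off := frobNorm_offDiag_sq_add_sum_diag A
  rw [hB, frobNorm_transpose_mul_mul_of_orthogonal (jacobiRot_transpose_mul_self hij hcs),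
    ← hB] at hB_off
  rw [Finset.sum_sub_distrib] at hdiag
  simp only [← hB, hzero, hBji, hAji] at hblock
  linarith

theorem frobNorm_offDiag_sq_jacobiRot_conj_le {A : Matrix (Fin n) (Fin n) ℝ} (hA : Aᵀ = A)
    (hij : i ≠ j) (hcs : c ^ 2 + s ^ 2 = 1)
    (hzero : ((jacobiRot i j c s)ᵀ * A * jacobiRot i j c s) i j = 0)
    (hmax : ∀ p q, p ≠ q → |A p q| ≤ |A i j|) {N : ℕ} (hN : n * (n - 1) = 2 * N) :
    frobNorm (offDiag ((jacobiRot i j c s)ᵀ * A * jacobiRot i j c s)) ^ 2 ≤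
      (1 - 1 / (N : ℝ)) * frobNorm (offDiag A) ^ 2 := by
  have hbound : frobNorm (offDiag A) ^ 2 ≤ 2 * N * A i j ^ 2 := by
    have := frobNorm_offDiag_sq_le fun p q hpq => sq_le_sq.mpr (hmax p q hpq)
    rwa [hN, Nat.cast_mul, Nat.cast_two] at this
  rw [frobNorm_offDiag_sq_jacobiRot_conj hA hij hcs hzero]
  rcases N.eq_zero_or_pos with rfl | hN
  · simp [sq_nonneg]
  · have hNR : (0 : ℝ) < N := Nat.cast_pos.mpr hN
    rw [sub_mul, one_mul, one_div_mul_eq_div, sub_le_sub_iff_left, div_le_iff₀ hNR]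
    linarith

end JacobiStep

theorem classical_jacobi_linear_convergence_general {n : ℕ}
    (N : ℕ) (hN : N = n * (n - 1) / 2)
    (A : ℕ → Matrix (Fin n) (Fin n) ℝ)
    (hsymm : ∀ k, (A k)ᵀ = A k)
    (i j : ℕ → Fin n) (c s : ℕ → ℝ)
    (hij : ∀ k, i k < j k)
    (hcs : ∀ k, c k ^ 2 + s k ^ 2 = 1)
    (hrec : ∀ k, A (k + 1) =
      (jacobiRot (i k) (j k) (c k) (s k))ᵀ * A k * jacobiRot (i k) (j k) (c k) (s k))
    (hzero : ∀ k, A (k + 1) (i k) (j k) = 0)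
    (hmax : ∀ k, ∀ p q : Fin n, p ≠ q → |A k p q| ≤ |A k (i k) (j k)|) :
    ∀ k, frobNorm (offDiag (A k)) ^ 2 ≤
      (1 - 1 / (N : ℝ)) ^ k * frobNorm (offDiag (A 0)) ^ 2 := by
  have hN2 : n * (n - 1) = 2 * N := by rw [hN, Nat.two_mul_div_two_of_even n.even_mul_pred_self]
  have hrate : 0 ≤ 1 - 1 / (N : ℝ) := by
    rw [one_div, sub_nonneg]
    exact Nat.cast_inv_le_one N
  intro k
  refine le_geom (u := fun k => frobNorm (offDiag (A k)) ^ 2) hrate k fun m _ => ?_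
  have hstep := hzero m
  rw [hrec m] at hstep ⊢
  exact frobNorm_offDiag_sq_jacobiRot_conj_le (hsymm m) (hij m).ne (hcs m) hstep (hmax m) hN2

/-- Linear convergence of the classical Jacobi method. -/
theorem classical_jacobi_linear_convergence {n : ℕ} (hn : 2 ≤ n)
    (N : ℕ) (hN : N = n * (n - 1) / 2)
    (A : ℕ → Matrix (Fin n) (Fin n) ℝ)
    (hsymm : ∀ k, (A k)ᵀ = A k)
    (i j : ℕ → Fin n) (c s : ℕ → ℝ)
    (hij : ∀ k, i k < j k)
    (hcs : ∀ k, c k ^ 2 + s k ^ 2 = 1)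
    (hrec : ∀ k, A (k + 1) =
      (jacobiRot (i k) (j k) (c k) (s k))ᵀ * A k * jacobiRot (i k) (j k) (c k) (s k))
    (hzero : ∀ k, A (k + 1) (i k) (j k) = 0)
    (hmax : ∀ k, ∀ p q : Fin n, p ≠ q → |A k p q| ≤ |A k (i k) (j k)|) :
    ∀ k, frobNorm (offDiag (A k)) ^ 2 ≤
      (1 - 1 / (N : ℝ)) ^ k * frobNorm (offDiag (A 0)) ^ 2 :=
  classical_jacobi_linear_convergence_general N hN A hsymm i j c s hij hcs hrec hzero hmax
end

section
/- Let Z, δZ, Q, R, F_1, F_2 ∈ ℝ^{n×n} satisfy: Z + δZ is orthogonal, Z = QR + F_1, and QᵀQ = I + F_2. Then ‖I − RᵀR‖ ≤ ‖R‖²‖F_2‖ + 2(‖F_1‖ + ‖δZ‖)‖Q‖‖R‖ + (‖F_1‖ + ‖δZ‖)². -/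
open Matrix

open scoped Matrix.Norms.L2Operator

lemma specNorm_eq {m n : ℕ} (A : Matrix (Fin m) (Fin n) ℝ) : specNorm A = ‖A‖ := rfl

lemma l2norm_transpose {m n : ℕ} (A : Matrix (Fin m) (Fin n) ℝ) : ‖Aᵀ‖ = ‖A‖ := by
  rw [← Matrix.l2_opNorm_conjTranspose A]
  have h : Aᴴ = Aᵀ := by ext i j; simp
  rw [h]

/-- Bound on `‖I - RᵀR‖` for an approximate QR factorization. -/
theorem RtR_deviation_bound {n : ℕ} (Z δZ Q R F₁ F₂ : Matrix (Fin n) (Fin n) ℝ)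
    (horth : (Z + δZ)ᵀ * (Z + δZ) = 1)
    (hZ : Z = Q * R + F₁) (hQ : Qᵀ * Q = 1 + F₂) :
    specNorm (1 - Rᵀ * R) ≤
      specNorm R ^ 2 * specNorm F₂ +
        2 * (specNorm F₁ + specNorm δZ) * specNorm Q * specNorm R +
        (specNorm F₁ + specNorm δZ) ^ 2 := by
  simp only [specNorm_eq]
  set E : Matrix (Fin n) (Fin n) ℝ := F₁ + δZ with hE
  have hkey : 1 - Rᵀ * R = Rᵀ * F₂ * R + ((Q * R)ᵀ * E + Eᵀ * (Q * R) + Eᵀ * E) := by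
    have h1 : Z + δZ = Q * R + E := by rw [hZ, hE, add_assoc]
    have h2 : (Q * R + E)ᵀ * (Q * R + E) = 1 := by rw [← h1]; exact horth
    have h3 : (Q * R + E)ᵀ * (Q * R + E)
        = Rᵀ * R + (Rᵀ * F₂ * R + ((Q * R)ᵀ * E + Eᵀ * (Q * R) + Eᵀ * E)) := by
      have : Rᵀ * Qᵀ * (Q * R) = Rᵀ * R + Rᵀ * F₂ * R := by
        calc Rᵀ * Qᵀ * (Q * R) = Rᵀ * (Qᵀ * Q) * R := by noncomm_ring
        _ = Rᵀ * (1 + F₂) * R := by rw [hQ]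
        _ = Rᵀ * R + Rᵀ * F₂ * R := by noncomm_ring
      simp only [Matrix.transpose_add, Matrix.transpose_mul]
      rw [Matrix.add_mul, Matrix.mul_add, Matrix.mul_add]
      rw [show Rᵀ * Qᵀ * (Q * R) = Rᵀ * Qᵀ * (Q * R) from rfl] at this
      rw [Matrix.mul_assoc Rᵀ Qᵀ (Q * R)] at this ⊢
      rw [this]
      noncomm_ring
    rw [h3] at h2
    linear_combination (norm := abel) h2.symm
  have hEle : ‖E‖ ≤ ‖F₁‖ + ‖δZ‖ := norm_add_le _ _
  have hQR : ‖Q * R‖ ≤ ‖Q‖ * ‖R‖ := Matrix.l2_opNorm_mul Q R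
  have h1 : ‖Rᵀ * F₂ * R‖ ≤ ‖R‖ * ‖F₂‖ * ‖R‖ := by
    calc ‖Rᵀ * F₂ * R‖ ≤ ‖Rᵀ * F₂‖ * ‖R‖ := Matrix.l2_opNorm_mul _ _
    _ ≤ ‖Rᵀ‖ * ‖F₂‖ * ‖R‖ :=
        mul_le_mul_of_nonneg_right (Matrix.l2_opNorm_mul _ _) (norm_nonneg _)
    _ = ‖R‖ * ‖F₂‖ * ‖R‖ := by rw [l2norm_transpose]
  have h2 : ‖(Q * R)ᵀ * E‖ ≤ (‖F₁‖ + ‖δZ‖) * (‖Q‖ * ‖R‖) := by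
    calc ‖(Q * R)ᵀ * E‖ ≤ ‖(Q * R)ᵀ‖ * ‖E‖ := Matrix.l2_opNorm_mul _ _
    _ = ‖Q * R‖ * ‖E‖ := by rw [l2norm_transpose]
    _ ≤ (‖Q‖ * ‖R‖) * (‖F₁‖ + ‖δZ‖) := by
        apply mul_le_mul hQR hEle (norm_nonneg _)
        positivity
    _ = (‖F₁‖ + ‖δZ‖) * (‖Q‖ * ‖R‖) := by ring
  have h3 : ‖Eᵀ * (Q * R)‖ ≤ (‖F₁‖ + ‖δZ‖) * (‖Q‖ * ‖R‖) := by
    calc ‖Eᵀ * (Q * R)‖ ≤ ‖Eᵀ‖ * ‖Q * R‖ := Matrix.l2_opNorm_mul _ _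
    _ = ‖E‖ * ‖Q * R‖ := by rw [l2norm_transpose]
    _ ≤ (‖F₁‖ + ‖δZ‖) * (‖Q‖ * ‖R‖) :=
        mul_le_mul hEle hQR (norm_nonneg _) (by positivity)
  have h4 : ‖Eᵀ * E‖ ≤ (‖F₁‖ + ‖δZ‖) ^ 2 := by
    calc ‖Eᵀ * E‖ ≤ ‖Eᵀ‖ * ‖E‖ := Matrix.l2_opNorm_mul _ _
    _ = ‖E‖ * ‖E‖ := by rw [l2norm_transpose]
    _ ≤ (‖F₁‖ + ‖δZ‖) ^ 2 := by
        rw [sq]; exact mul_le_mul hEle hEle (norm_nonneg _) (by positivity)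
  calc ‖1 - Rᵀ * R‖ = ‖Rᵀ * F₂ * R + ((Q * R)ᵀ * E + Eᵀ * (Q * R) + Eᵀ * E)‖ := by rw [hkey]
  _ ≤ ‖Rᵀ * F₂ * R‖ + (‖(Q * R)ᵀ * E‖ + (‖Eᵀ * (Q * R)‖ + ‖Eᵀ * E‖)) := by
      have a := norm_add_le (Rᵀ * F₂ * R) ((Q * R)ᵀ * E + Eᵀ * (Q * R) + Eᵀ * E)
      have b := norm_add_le ((Q * R)ᵀ * E + Eᵀ * (Q * R)) (Eᵀ * E)
      have c := norm_add_le ((Q * R)ᵀ * E) (Eᵀ * (Q * R))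
      linarith
  _ ≤ ‖R‖ ^ 2 * ‖F₂‖ + 2 * (‖F₁‖ + ‖δZ‖) * ‖Q‖ * ‖R‖ + (‖F₁‖ + ‖δZ‖) ^ 2 := by
      nlinarith [h1, h2, h3, h4]
end

section
/- Let A, E ∈ ℝ^{n×n} be symmetric, let Z, δZ ∈ ℝ^{n×n} be such that P = Z + δZ is orthogonal, and let D ∈ ℝ^{n×n} be diagonal with A + E = P D Pᵀ. Then for every Q ∈ ℝ^{n×n}, ‖off(Qᵀ A Q)‖_F ≤ ‖A‖·‖Q − Z‖_F² + 2‖A‖·‖Z‖·‖Q − Z‖_F + ‖A‖_F (2‖Z‖ + ‖δZ‖) ‖δZ‖ + ‖E‖_F. -/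
open Matrix

/-!
Put `B = Q - Z` and `P = Z + δZ`. Both `Qᵀ A Q - Zᵀ A Z` and `Pᵀ A P - Zᵀ A Z` expand as
`Bᵀ A B + Bᵀ A Z + Zᵀ A B` (with `B = δZ` in the second case), and orthogonality of `P` turns the
factorization into `Pᵀ A P = D - Pᵀ E P`. Since `off` ignores the diagonal `D` and does not increase
the Frobenius norm, `‖off(Qᵀ A Q)‖_F ≤ ‖Qᵀ A Q - D‖_F`, and the bound follows from the triangle
inequality together with `‖X Y‖_F ≤ ‖X‖ ‖Y‖_F`, which holds column by column. The first
difference is estimated with `‖A‖`, the second with `‖A‖_F`.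
-/

section NormBounds

variable {m n l : ℕ}

section Frobenius
open scoped Matrix.Norms.Frobenius

theorem frobNorm_eq_frobenius_norm (A : Matrix (Fin m) (Fin n) ℝ) : frobNorm A = ‖A‖ := by
  simp only [frobNorm, frobenius_norm_def, Real.sqrt_eq_rpow, Real.rpow_two, Real.norm_eq_abs,
    sq_abs]

theorem frobNorm_nonneg (A : Matrix (Fin m) (Fin n) ℝ) : 0 ≤ frobNorm A :=
  Real.sqrt_nonneg _

theorem frobNorm_add_le (A B : Matrix (Fin m) (Fin n) ℝ) :
    frobNorm (A + B) ≤ frobNorm A + frobNorm B := by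
  simpa only [frobNorm_eq_frobenius_norm] using norm_add_le A B

theorem frobNorm_sub_le (A B : Matrix (Fin m) (Fin n) ℝ) :
    frobNorm (A - B) ≤ frobNorm A + frobNorm B := by
  simpa only [frobNorm_eq_frobenius_norm] using norm_sub_le A B

theorem frobNorm_transpose (A : Matrix (Fin m) (Fin n) ℝ) : frobNorm Aᵀ = frobNorm A := by
  simpa only [frobNorm_eq_frobenius_norm] using frobenius_norm_transpose A

theorem frobNorm_mul_le (A : Matrix (Fin m) (Fin n) ℝ) (B : Matrix (Fin n) (Fin l) ℝ) :
    frobNorm (A * B) ≤ frobNorm A * frobNorm B := by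
  simpa only [frobNorm_eq_frobenius_norm] using frobenius_norm_mul A B

end Frobenius

section L2Operator
open scoped Matrix.Norms.L2Operator

theorem specNorm_eq_l2_opNorm (A : Matrix (Fin m) (Fin n) ℝ) : specNorm A = ‖A‖ := rfl

theorem specNorm_nonneg (A : Matrix (Fin m) (Fin n) ℝ) : 0 ≤ specNorm A := norm_nonneg _

theorem specNorm_transpose (A : Matrix (Fin m) (Fin n) ℝ) : specNorm Aᵀ = specNorm A := by
  simpa only [specNorm_eq_l2_opNorm, conjTranspose_eq_transpose_of_trivial] using
    l2_opNorm_conjTranspose A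

theorem specNorm_one_le : specNorm (1 : Matrix (Fin n) (Fin n) ℝ) ≤ 1 := by
  rw [specNorm_eq_l2_opNorm, ← diagonal_one, l2_opNorm_diagonal]
  exact (pi_norm_le_iff_of_nonneg zero_le_one).mpr fun _ => norm_one.le

theorem specNorm_le_one_of_transpose_mul_self {P : Matrix (Fin m) (Fin n) ℝ} (hP : Pᵀ * P = 1) :
    specNorm P ≤ 1 := by
  have h : specNorm P * specNorm P ≤ 1 := by
    simpa only [specNorm_eq_l2_opNorm, ← l2_opNorm_conjTranspose_mul_self,
      conjTranspose_eq_transpose_of_trivial, hP] using specNorm_one_le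
  nlinarith [specNorm_nonneg P]

theorem norm_toLp_col_mul_le (A : Matrix (Fin m) (Fin n) ℝ) (B : Matrix (Fin n) (Fin l) ℝ)
    (q : Fin l) : ‖WithLp.toLp 2 ((A * B)ᵀ q)‖ ≤ specNorm A * ‖WithLp.toLp 2 (Bᵀ q)‖ := by
  rw [specNorm_eq_l2_opNorm]
  convert l2_opNorm_mulVec A (WithLp.toLp 2 (Bᵀ q)) using 3
  ext i
  simp [mul_apply, mulVec, dotProduct]

end L2Operator

theorem frobNorm_sq_eq_sum_norm_col (B : Matrix (Fin n) (Fin l) ℝ) :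
    frobNorm B ^ 2 = ∑ q, ‖WithLp.toLp 2 (Bᵀ q)‖ ^ 2 := by
  rw [frobNorm, Real.sq_sqrt (by positivity), Finset.sum_comm]
  simp [EuclideanSpace.norm_sq_eq]

theorem frobNorm_mul_le_specNorm_mul (A : Matrix (Fin m) (Fin n) ℝ) (B : Matrix (Fin n) (Fin l) ℝ) :
    frobNorm (A * B) ≤ specNorm A * frobNorm B := by
  refine (pow_le_pow_iff_left₀ (frobNorm_nonneg _)
    (mul_nonneg (specNorm_nonneg A) (frobNorm_nonneg B)) two_ne_zero).mp ?_
  rw [mul_pow, frobNorm_sq_eq_sum_norm_col, frobNorm_sq_eq_sum_norm_col, Finset.mul_sum]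
  gcongr with q
  rw [← mul_pow]
  gcongr
  exact norm_toLp_col_mul_le A B q

theorem frobNorm_mul_le_mul_specNorm (A : Matrix (Fin m) (Fin n) ℝ) (B : Matrix (Fin n) (Fin l) ℝ) :
    frobNorm (A * B) ≤ frobNorm A * specNorm B := by
  rw [← frobNorm_transpose, transpose_mul, mul_comm, ← frobNorm_transpose A, ← specNorm_transpose B]
  exact frobNorm_mul_le_specNorm_mul Bᵀ Aᵀ

theorem frobNorm_mul_mul_le {k : ℕ} (X : Matrix (Fin m) (Fin n) ℝ) (Y : Matrix (Fin n) (Fin l) ℝ)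
    (W : Matrix (Fin l) (Fin k) ℝ) :
    frobNorm (X * Y * W) ≤ specNorm X * frobNorm Y * specNorm W :=
  (frobNorm_mul_le_mul_specNorm _ W).trans <| by
    gcongr
    · exact specNorm_nonneg W
    · exact frobNorm_mul_le_specNorm_mul X Y

theorem frobNorm_congr_le_of_transpose_mul_self {P : Matrix (Fin m) (Fin n) ℝ} (hP : Pᵀ * P = 1)
    (E : Matrix (Fin m) (Fin m) ℝ) : frobNorm (Pᵀ * E * P) ≤ frobNorm E := by
  have hP1 := specNorm_le_one_of_transpose_mul_self hP
  calc frobNorm (Pᵀ * E * P) ≤ specNorm P * frobNorm E * specNorm P := by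
        simpa only [specNorm_transpose] using frobNorm_mul_mul_le Pᵀ E P
    _ ≤ specNorm P * frobNorm E :=
        mul_le_of_le_one_right (mul_nonneg (specNorm_nonneg P) (frobNorm_nonneg E)) hP1
    _ ≤ frobNorm E := mul_le_of_le_one_left (frobNorm_nonneg E) hP1

theorem transpose_add_mul_mul_add_sub {ι κ R : Type*} [Fintype ι] [CommRing R]
    (A : Matrix ι ι R) (Z B : Matrix ι κ R) :
    (Z + B)ᵀ * A * (Z + B) - Zᵀ * A * Z = Bᵀ * A * B + Bᵀ * A * Z + Zᵀ * A * B := by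
  simp only [transpose_add, Matrix.add_mul, Matrix.mul_add]
  abel

theorem frobNorm_congr_add_sub_le_specNorm_mul (A : Matrix (Fin m) (Fin m) ℝ)
    (Z B : Matrix (Fin m) (Fin n) ℝ) :
    frobNorm ((Z + B)ᵀ * A * (Z + B) - Zᵀ * A * Z) ≤
      specNorm A * frobNorm B ^ 2 + 2 * specNorm A * specNorm Z * frobNorm B := by
  have hBAB : frobNorm (Bᵀ * A * B) ≤ specNorm A * frobNorm B ^ 2 := by
    calc frobNorm (Bᵀ * A * B) ≤ frobNorm Bᵀ * frobNorm (A * B) := by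
          rw [Matrix.mul_assoc]; exact frobNorm_mul_le _ _
      _ ≤ frobNorm B * (specNorm A * frobNorm B) := by
          rw [frobNorm_transpose]
          gcongr
          · exact frobNorm_nonneg B
          · exact frobNorm_mul_le_specNorm_mul A B
      _ = specNorm A * frobNorm B ^ 2 := by ring
  have hBAZ : frobNorm (Bᵀ * A * Z) ≤ specNorm A * specNorm Z * frobNorm B := by
    calc frobNorm (Bᵀ * A * Z) ≤ frobNorm (Bᵀ * A) * specNorm Z := frobNorm_mul_le_mul_specNorm _ _
      _ ≤ frobNorm Bᵀ * specNorm A * specNorm Z := by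
          gcongr
          · exact specNorm_nonneg Z
          · exact frobNorm_mul_le_mul_specNorm _ _
      _ = specNorm A * specNorm Z * frobNorm B := by rw [frobNorm_transpose]; ring
  have hZAB : frobNorm (Zᵀ * A * B) ≤ specNorm A * specNorm Z * frobNorm B := by
    calc frobNorm (Zᵀ * A * B) ≤ specNorm Zᵀ * frobNorm (A * B) := by
          rw [Matrix.mul_assoc]; exact frobNorm_mul_le_specNorm_mul _ _
      _ ≤ specNorm Zᵀ * (specNorm A * frobNorm B) := by
          gcongr
          · exact specNorm_nonneg _
          · exact frobNorm_mul_le_specNorm_mul A B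
      _ = specNorm A * specNorm Z * frobNorm B := by rw [specNorm_transpose]; ring
  rw [transpose_add_mul_mul_add_sub]
  linarith [frobNorm_add_le (Bᵀ * A * B + Bᵀ * A * Z) (Zᵀ * A * B),
    frobNorm_add_le (Bᵀ * A * B) (Bᵀ * A * Z)]

theorem frobNorm_congr_add_sub_le_frobNorm_mul (A : Matrix (Fin m) (Fin m) ℝ)
    (Z B : Matrix (Fin m) (Fin n) ℝ) :
    frobNorm ((Z + B)ᵀ * A * (Z + B) - Zᵀ * A * Z) ≤
      frobNorm A * (2 * specNorm Z + specNorm B) * specNorm B := by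
  have hBAB := frobNorm_mul_mul_le Bᵀ A B
  have hBAZ := frobNorm_mul_mul_le Bᵀ A Z
  have hZAB := frobNorm_mul_mul_le Zᵀ A B
  rw [specNorm_transpose] at hBAB hBAZ hZAB
  rw [transpose_add_mul_mul_add_sub]
  linarith [frobNorm_add_le (Bᵀ * A * B + Bᵀ * A * Z) (Zᵀ * A * B),
    frobNorm_add_le (Bᵀ * A * B) (Bᵀ * A * Z)]

theorem frobNorm_offDiag_le (M : Matrix (Fin n) (Fin n) ℝ) : frobNorm (offDiag M) ≤ frobNorm M := by
  refine Real.sqrt_le_sqrt (Finset.sum_le_sum fun p _ => Finset.sum_le_sum fun q _ => ?_)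
  by_cases hpq : p = q
  · simp [offDiag, hpq, sq_nonneg]
  · simp [offDiag, hpq]

theorem offDiag_sub_of_isDiag {D : Matrix (Fin n) (Fin n) ℝ} (hD : D.IsDiag)
    (M : Matrix (Fin n) (Fin n) ℝ) : offDiag (M - D) = offDiag M := by
  ext p q
  by_cases hpq : p = q
  · simp [offDiag, hpq]
  · simp [offDiag, hpq, hD hpq]

theorem congr_sub_eq_neg_of_eq_mul_mul_transpose {ι R : Type*} [Fintype ι] [DecidableEq ι]
    [CommRing R] {A E P D : Matrix ι ι R} (hP : Pᵀ * P = 1) (hfac : A + E = P * D * Pᵀ) :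
    Pᵀ * A * P - D = -(Pᵀ * E * P) := by
  have : Pᵀ * (A + E) * P = D := by
    rw [hfac, show Pᵀ * (P * D * Pᵀ) * P = (Pᵀ * P) * D * (Pᵀ * P) by noncomm_ring, hP,
      Matrix.one_mul, Matrix.mul_one]
  rw [← this]
  noncomm_ring

end NormBounds

theorem off_QAQ_bound_general {n : ℕ} (A E Z δZ D : Matrix (Fin n) (Fin n) ℝ)
    (horth : (Z + δZ)ᵀ * (Z + δZ) = 1)
    (hD : D.IsDiag)
    (hfac : A + E = (Z + δZ) * D * (Z + δZ)ᵀ) :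
    ∀ Q : Matrix (Fin n) (Fin n) ℝ,
      frobNorm (offDiag (Qᵀ * A * Q)) ≤
        specNorm A * frobNorm (Q - Z) ^ 2 +
          2 * specNorm A * specNorm Z * frobNorm (Q - Z) +
          frobNorm A * (2 * specNorm Z + specNorm δZ) * specNorm δZ + frobNorm E := by
  intro Q
  set P := Z + δZ
  have hQ := frobNorm_congr_add_sub_le_specNorm_mul A Z (Q - Z)
  rw [add_sub_cancel] at hQ
  have hδZ := frobNorm_congr_add_sub_le_frobNorm_mul A Z δZ
  have hE := frobNorm_congr_le_of_transpose_mul_self horth E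
  have hsplit : Qᵀ * A * Q - D =
      (Qᵀ * A * Q - Zᵀ * A * Z) - (Pᵀ * A * P - Zᵀ * A * Z) - Pᵀ * E * P := by
    rw [sub_eq_add_neg _ (Pᵀ * E * P), ← congr_sub_eq_neg_of_eq_mul_mul_transpose horth hfac]
    abel
  calc frobNorm (offDiag (Qᵀ * A * Q)) = frobNorm (offDiag (Qᵀ * A * Q - D)) := by
        rw [offDiag_sub_of_isDiag hD]
    _ ≤ frobNorm (Qᵀ * A * Q - D) := frobNorm_offDiag_le _
    _ ≤ frobNorm (Qᵀ * A * Q - Zᵀ * A * Z) + frobNorm (Pᵀ * A * P - Zᵀ * A * Z)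
          + frobNorm (Pᵀ * E * P) := by
        rw [hsplit]
        exact (frobNorm_sub_le _ _).trans (by gcongr; exact frobNorm_sub_le _ _)
    _ ≤ _ := by linarith

/-- Bound on `‖off(Qᵀ A Q)‖_F` for a nearly exact eigendecomposition. -/
theorem off_QAQ_bound {n : ℕ} (A E Z δZ D : Matrix (Fin n) (Fin n) ℝ)
    (hA : Aᵀ = A) (hE : Eᵀ = E)
    (horth : (Z + δZ)ᵀ * (Z + δZ) = 1)
    (hD : D.IsDiag)
    (hfac : A + E = (Z + δZ) * D * (Z + δZ)ᵀ) :
    ∀ Q : Matrix (Fin n) (Fin n) ℝ,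
      frobNorm (offDiag (Qᵀ * A * Q)) ≤
        specNorm A * frobNorm (Q - Z) ^ 2 +
          2 * specNorm A * specNorm Z * frobNorm (Q - Z) +
          frobNorm A * (2 * specNorm Z + specNorm δZ) * specNorm δZ + frobNorm E :=
  off_QAQ_bound_general A E Z δZ D horth hD hfac
end
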